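/- arXiv:1903.05511 — 2 statements merged into one kernel-verified Lean document; each statement's English description precedes it below -/
import Mathlib

section
/- (Theorem 1, iterate form.) Let Ṽ₀ : ℝ^k → ℝ be an arbitrary bounded function, define V₀ : Δ(S) → ℝ by V₀(b) = Ṽ₀(A b), and define inductively Ṽ_{t+1} = H̃ Ṽ_t and V_{t+1} = H V_t. Then for every t ∈ ℕ and every b ∈ Δ(S) one has Ṽ_t(A b) ≤ V_t(b); that is, value iteration with the abstract operator H̃ over characteristic vectors always lower-bounds value iteration with the exact operator H over beliefs. -/
open Finset Matrix

section POSG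

variable {S A1 A2 O : Type*} [Fintype S] [Fintype A1] [Fintype A2] [Fintype O]

/-- Expected immediate reward `E_{b,π₁,π₂}[R]`. -/
def expReward (R : S → A1 → A2 → ℝ) (b : S → ℝ) (π1 : A1 → ℝ) (π2 : S → A2 → ℝ) : ℝ :=
  ∑ s, ∑ a1, ∑ a2, b s * π1 a1 * π2 s a2 * R s a1 a2

/-- `Pr_{b,π₁,π₂}[a₁,o]`, the probability that player 1 plays `a1` and observes `o`. -/
def prObs (T : O → S → S → A1 → A2 → ℝ) (b : S → ℝ) (π1 : A1 → ℝ) (π2 : S → A2 → ℝ)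
    (a1 : A1) (o : O) : ℝ :=
  π1 a1 * ∑ s, ∑ a2, ∑ s', b s * π2 s a2 * T o s' s a1 a2

/-- Bayesian belief update `τ(b,a₁,π₂,o)`. -/
noncomputable def beliefUpd (T : O → S → S → A1 → A2 → ℝ) (b : S → ℝ) (π2 : S → A2 → ℝ)
    (a1 : A1) (o : O) : S → ℝ := fun s' =>
  (∑ s, ∑ a2, b s * π2 s a2 * T o s' s a1 a2) /
    (∑ s'', ∑ s, ∑ a2, b s * π2 s a2 * T o s'' s a1 a2)

/-- Value of the stage game under stage strategies `π₁, π₂` with continuation values `V`. -/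
noncomputable def stageVal (T : O → S → S → A1 → A2 → ℝ) (R : S → A1 → A2 → ℝ) (γ : ℝ)
    (V : (S → ℝ) → ℝ) (b : S → ℝ) (π1 : A1 → ℝ) (π2 : S → A2 → ℝ) : ℝ :=
  expReward R b π1 π2 + γ * ∑ a1, ∑ o,
    if 0 < prObs T b π1 π2 a1 o then
      prObs T b π1 π2 a1 o * V (beliefUpd T b π2 a1 o)
    else 0

/-- The exact Bellman (stage-game) operator `H` over beliefs. -/
noncomputable def Hop (T : O → S → S → A1 → A2 → ℝ) (R : S → A1 → A2 → ℝ) (γ : ℝ)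
    (V : (S → ℝ) → ℝ) (b : S → ℝ) : ℝ :=
  ⨅ π2 : {π2 : S → A2 → ℝ // ∀ s, π2 s ∈ stdSimplex ℝ A2},
    ⨆ π1 : {π1 : A1 → ℝ // π1 ∈ stdSimplex ℝ A1},
      stageVal T R γ V b π1.1 π2.1

/-- The abstract stage-game operator `H̃` over characteristic vectors. -/
noncomputable def Habs {k : ℕ} (T : O → S → S → A1 → A2 → ℝ) (R : S → A1 → A2 → ℝ) (γ : ℝ)
    (A : Matrix (Fin k) S ℝ) (W : (Fin k → ℝ) → ℝ) (χ : Fin k → ℝ) : ℝ :=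
  ⨅ b : {b : S → ℝ // b ∈ stdSimplex ℝ S ∧ A.mulVec b = χ},
    ⨅ π2 : {π2 : S → A2 → ℝ // ∀ s, π2 s ∈ stdSimplex ℝ A2},
      ⨆ π1 : {π1 : A1 → ℝ // π1 ∈ stdSimplex ℝ A1},
        stageVal T R γ (fun b' => W (A.mulVec b')) b.1 π1.1 π2.1

end POSG

/-
The abstract operator minimises over all beliefs with a given characteristic vector, so at
`χ = A *ᵥ b` it is at most the exact stage game at `b` itself, played with the continuation
`W ∘ A`. Since the exact operator is monotone in its continuation, the inequality
`W_t ∘ A ≤ V_t` on the simplex propagates from `t` to `t + 1`. Boundedness of `W₀` propagates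
as well and guarantees that every infimum and supremum involved is a genuine one.
-/

lemma bddBelow_range_of_abs_le {ι : Sort*} {f : ι → ℝ} {B : ℝ} (h : ∀ i, |f i| ≤ B) :
    BddBelow (Set.range f) :=
  ⟨-B, by rintro _ ⟨i, rfl⟩; exact neg_le_of_abs_le (h i)⟩

lemma bddAbove_range_of_abs_le {ι : Sort*} {f : ι → ℝ} {B : ℝ} (h : ∀ i, |f i| ≤ B) :
    BddAbove (Set.range f) :=
  ⟨B, by rintro _ ⟨i, rfl⟩; exact le_of_abs_le (h i)⟩

lemma abs_ciInf_le_of_abs_le {ι : Sort*} [Nonempty ι] {f : ι → ℝ} {B : ℝ}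
    (h : ∀ i, |f i| ≤ B) : |⨅ i, f i| ≤ B :=
  abs_le.2 ⟨le_ciInf fun i => neg_le_of_abs_le (h i),
    ciInf_le_of_le (bddBelow_range_of_abs_le h) (Classical.arbitrary ι) (le_of_abs_le (h _))⟩

lemma abs_ciSup_le_of_abs_le {ι : Sort*} [Nonempty ι] {f : ι → ℝ} {B : ℝ}
    (h : ∀ i, |f i| ≤ B) : |⨆ i, f i| ≤ B :=
  abs_le.2 ⟨le_ciSup_of_le (bddAbove_range_of_abs_le h) (Classical.arbitrary ι)
    (neg_le_of_abs_le (h _)), ciSup_le fun i => le_of_abs_le (h i)⟩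

lemma abs_le_one_of_mem_stdSimplex {ι : Type*} [Fintype ι] {p : ι → ℝ}
    (hp : p ∈ stdSimplex ℝ ι) (i : ι) : |p i| ≤ 1 :=
  abs_le.2 ⟨by linarith [hp.1 i], (mem_Icc_of_mem_stdSimplex hp i).2⟩

section ValueIteration

variable {S A1 A2 O : Type*} [Fintype S] [Fintype A2]
  {T : O → S → S → A1 → A2 → ℝ} {R : S → A1 → A2 → ℝ} {γ : ℝ}
  {b : S → ℝ} {π1 : A1 → ℝ} {π2 : S → A2 → ℝ}

instance nonempty_stdSimplex_family [Nonempty A2] :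
    Nonempty {π2 : S → A2 → ℝ // ∀ s, π2 s ∈ stdSimplex ℝ A2} :=
  let π : stdSimplex ℝ A2 := Classical.arbitrary _
  ⟨⟨fun _ => π, fun _ => π.2⟩⟩

lemma prObs_eq_mul_sum (a1 : A1) (o : O) :
    prObs T b π1 π2 a1 o = π1 a1 * ∑ s', ∑ s, ∑ a2, b s * π2 s a2 * T o s' s a1 a2 := by
  rw [prObs, sum_congr rfl fun s _ => sum_comm, sum_comm]

lemma prObs_nonneg (hT : ∀ o s' s a1 a2, 0 ≤ T o s' s a1 a2) (hb : 0 ≤ b) (hπ1 : 0 ≤ π1)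
    (hπ2 : 0 ≤ π2) (a1 : A1) (o : O) : 0 ≤ prObs T b π1 π2 a1 o :=
  mul_nonneg (hπ1 a1) <| sum_nonneg fun s _ => sum_nonneg fun a2 _ => sum_nonneg fun s' _ =>
    mul_nonneg (mul_nonneg (hb s) (hπ2 s a2)) (hT o s' s a1 a2)

lemma beliefUpd_mem_stdSimplex (hT : ∀ o s' s a1 a2, 0 ≤ T o s' s a1 a2) (hb : 0 ≤ b)
    (hπ1 : 0 ≤ π1) (hπ2 : 0 ≤ π2) {a1 : A1} {o : O} (hpos : 0 < prObs T b π1 π2 a1 o) :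
    beliefUpd T b π2 a1 o ∈ stdSimplex ℝ S := by
  have hweight : ∀ s', 0 ≤ ∑ s, ∑ a2, b s * π2 s a2 * T o s' s a1 a2 := fun s' =>
    sum_nonneg fun s _ => sum_nonneg fun a2 _ =>
      mul_nonneg (mul_nonneg (hb s) (hπ2 s a2)) (hT o s' s a1 a2)
  have htotal : 0 < ∑ s', ∑ s, ∑ a2, b s * π2 s a2 * T o s' s a1 a2 :=
    pos_of_mul_pos_right (prObs_eq_mul_sum (T := T) a1 o ▸ hpos) (hπ1 a1)
  exact ⟨fun s' => div_nonneg (hweight s') htotal.le,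
    by simp only [beliefUpd, ← sum_div, div_self htotal.ne']⟩

variable [Fintype A1] [Fintype O]

lemma sum_prObs_eq_one (hTsum : ∀ s a1 a2, ∑ o, ∑ s', T o s' s a1 a2 = 1)
    (hb : ∑ s, b s = 1) (hπ1 : ∑ a, π1 a = 1) (hπ2 : ∀ s, ∑ a, π2 s a = 1) :
    ∑ a1, ∑ o, prObs T b π1 π2 a1 o = 1 := by
  have hmass : ∀ a1, ∑ o, ∑ s, ∑ a2, ∑ s', b s * π2 s a2 * T o s' s a1 a2 = 1 := fun a1 =>
    calc _ = ∑ s, ∑ a2, b s * π2 s a2 * ∑ o, ∑ s', T o s' s a1 a2 := by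
          rw [sum_comm]
          refine sum_congr rfl fun s _ => ?_
          rw [sum_comm]
          simp only [mul_sum]
      _ = 1 := by simp only [hTsum, mul_one, ← mul_sum, hπ2, hb]
  calc ∑ a1, ∑ o, prObs T b π1 π2 a1 o
      = ∑ a1, π1 a1 * ∑ o, ∑ s, ∑ a2, ∑ s', b s * π2 s a2 * T o s' s a1 a2 := by
        simp only [prObs, mul_sum]
    _ = 1 := by simp only [hmass, mul_one, hπ1]

noncomputable def expContinuation (T : O → S → S → A1 → A2 → ℝ) (V : (S → ℝ) → ℝ)
    (b : S → ℝ) (π1 : A1 → ℝ) (π2 : S → A2 → ℝ) : ℝ :=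
  ∑ a1, ∑ o, if 0 < prObs T b π1 π2 a1 o then
    prObs T b π1 π2 a1 o * V (beliefUpd T b π2 a1 o) else 0

lemma stageVal_eq (V : (S → ℝ) → ℝ) :
    stageVal T R γ V b π1 π2 = expReward R b π1 π2 + γ * expContinuation T V b π1 π2 :=
  rfl

lemma abs_expReward_le (hb : b ∈ stdSimplex ℝ S) (hπ1 : π1 ∈ stdSimplex ℝ A1)
    (hπ2 : ∀ s, π2 s ∈ stdSimplex ℝ A2) :
    |expReward R b π1 π2| ≤ ∑ s, ∑ a1, ∑ a2, |R s a1 a2| := by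
  refine (abs_sum_le_sum_abs _ _).trans (sum_le_sum fun s _ => ?_)
  refine (abs_sum_le_sum_abs _ _).trans (sum_le_sum fun a1 _ => ?_)
  refine (abs_sum_le_sum_abs _ _).trans (sum_le_sum fun a2 _ => ?_)
  rw [abs_mul, abs_mul, abs_mul]
  refine mul_le_of_le_one_left (abs_nonneg _) (mul_le_one₀ ?_ (abs_nonneg _) ?_)
  · exact mul_le_one₀ (abs_le_one_of_mem_stdSimplex hb s) (abs_nonneg _)
      (abs_le_one_of_mem_stdSimplex hπ1 a1)
  · exact abs_le_one_of_mem_stdSimplex (hπ2 s) a2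

lemma abs_expContinuation_le (hT : ∀ o s' s a1 a2, 0 ≤ T o s' s a1 a2)
    (hTsum : ∀ s a1 a2, ∑ o, ∑ s', T o s' s a1 a2 = 1) (hb : b ∈ stdSimplex ℝ S)
    (hπ1 : π1 ∈ stdSimplex ℝ A1) (hπ2 : ∀ s, π2 s ∈ stdSimplex ℝ A2) {V : (S → ℝ) → ℝ}
    {C : ℝ} (hV : ∀ b' ∈ stdSimplex ℝ S, |V b'| ≤ C) :
    |expContinuation T V b π1 π2| ≤ C := by
  have hC : 0 ≤ C := (abs_nonneg _).trans (hV b hb)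
  calc |expContinuation T V b π1 π2| ≤ ∑ a1, ∑ o, prObs T b π1 π2 a1 o * C := by
        refine (abs_sum_le_sum_abs _ _).trans (sum_le_sum fun a1 _ => ?_)
        refine (abs_sum_le_sum_abs _ _).trans (sum_le_sum fun o _ => ?_)
        split_ifs with hpos
        · rw [abs_mul, abs_of_pos hpos]
          exact mul_le_mul_of_nonneg_left (hV _ (beliefUpd_mem_stdSimplex hT hb.1 hπ1.1
            (fun s => (hπ2 s).1) hpos)) hpos.le
        · rw [abs_zero]
          exact mul_nonneg (prObs_nonneg hT hb.1 hπ1.1 (fun s => (hπ2 s).1) a1 o) hC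
    _ = C := by
        simp only [← sum_mul, sum_prObs_eq_one hTsum hb.2 hπ1.2 fun s => (hπ2 s).2, one_mul]

lemma expContinuation_mono (hT : ∀ o s' s a1 a2, 0 ≤ T o s' s a1 a2) (hb : 0 ≤ b)
    (hπ1 : 0 ≤ π1) (hπ2 : 0 ≤ π2) {V V' : (S → ℝ) → ℝ}
    (hVV' : ∀ b' ∈ stdSimplex ℝ S, V b' ≤ V' b') :
    expContinuation T V b π1 π2 ≤ expContinuation T V' b π1 π2 := by
  refine sum_le_sum fun a1 _ => sum_le_sum fun o _ => ?_
  split_ifs with hpos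
  · exact mul_le_mul_of_nonneg_left (hVV' _ (beliefUpd_mem_stdSimplex hT hb hπ1 hπ2 hpos))
      hpos.le
  · exact le_rfl

lemma abs_stageVal_le (hT : ∀ o s' s a1 a2, 0 ≤ T o s' s a1 a2)
    (hTsum : ∀ s a1 a2, ∑ o, ∑ s', T o s' s a1 a2 = 1) (hγ : 0 ≤ γ) (hb : b ∈ stdSimplex ℝ S)
    (hπ1 : π1 ∈ stdSimplex ℝ A1) (hπ2 : ∀ s, π2 s ∈ stdSimplex ℝ A2) {V : (S → ℝ) → ℝ}
    {C : ℝ} (hV : ∀ b' ∈ stdSimplex ℝ S, |V b'| ≤ C) :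
    |stageVal T R γ V b π1 π2| ≤ ∑ s, ∑ a1, ∑ a2, |R s a1 a2| + γ * C := by
  rw [stageVal_eq]
  refine (abs_add_le _ _).trans (add_le_add (abs_expReward_le hb hπ1 hπ2) ?_)
  rw [abs_mul, abs_of_nonneg hγ]
  exact mul_le_mul_of_nonneg_left (abs_expContinuation_le hT hTsum hb hπ1 hπ2 hV) hγ

lemma stageVal_mono (hT : ∀ o s' s a1 a2, 0 ≤ T o s' s a1 a2) (hγ : 0 ≤ γ) (hb : 0 ≤ b)
    (hπ1 : 0 ≤ π1) (hπ2 : 0 ≤ π2) {V V' : (S → ℝ) → ℝ}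
    (hVV' : ∀ b' ∈ stdSimplex ℝ S, V b' ≤ V' b') :
    stageVal T R γ V b π1 π2 ≤ stageVal T R γ V' b π1 π2 := by
  simp only [stageVal_eq]
  gcongr
  exact expContinuation_mono hT hb hπ1 hπ2 hVV'

lemma abs_Hop_le [Nonempty A1] [Nonempty A2] (hT : ∀ o s' s a1 a2, 0 ≤ T o s' s a1 a2)
    (hTsum : ∀ s a1 a2, ∑ o, ∑ s', T o s' s a1 a2 = 1) (hγ : 0 ≤ γ) {V : (S → ℝ) → ℝ}
    {C : ℝ} (hV : ∀ b' ∈ stdSimplex ℝ S, |V b'| ≤ C) (hb : b ∈ stdSimplex ℝ S) :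
    |Hop T R γ V b| ≤ ∑ s, ∑ a1, ∑ a2, |R s a1 a2| + γ * C :=
  abs_ciInf_le_of_abs_le fun π2 => abs_ciSup_le_of_abs_le fun π1 =>
    abs_stageVal_le hT hTsum hγ hb π1.2 π2.2 hV

lemma Hop_mono [Nonempty A1] (hT : ∀ o s' s a1 a2, 0 ≤ T o s' s a1 a2)
    (hTsum : ∀ s a1 a2, ∑ o, ∑ s', T o s' s a1 a2 = 1) (hγ : 0 ≤ γ) {V V' : (S → ℝ) → ℝ}
    {C C' : ℝ} (hV : ∀ b' ∈ stdSimplex ℝ S, |V b'| ≤ C)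
    (hV' : ∀ b' ∈ stdSimplex ℝ S, |V' b'| ≤ C') (hVV' : ∀ b' ∈ stdSimplex ℝ S, V b' ≤ V' b')
    (hb : b ∈ stdSimplex ℝ S) :
    Hop T R γ V b ≤ Hop T R γ V' b := by
  refine ciInf_mono (bddBelow_range_of_abs_le fun π2 => abs_ciSup_le_of_abs_le fun π1 =>
    abs_stageVal_le hT hTsum hγ hb π1.2 π2.2 hV) fun π2 => ciSup_mono ?_ fun π1 => ?_
  · exact bddAbove_range_of_abs_le fun π1 => abs_stageVal_le hT hTsum hγ hb π1.2 π2.2 hV'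
  · exact stageVal_mono hT hγ hb.1 π1.2.1 (fun s => (π2.2 s).1) hVV'

variable {k : ℕ} {A : Matrix (Fin k) S ℝ} {W : (Fin k → ℝ) → ℝ}

lemma Habs_eq_iInf_Hop (χ : Fin k → ℝ) :
    Habs T R γ A W χ =
      ⨅ b : {b : S → ℝ // b ∈ stdSimplex ℝ S ∧ A *ᵥ b = χ},
        Hop T R γ (fun b' => W (A *ᵥ b')) b :=
  rfl

lemma abs_Habs_mulVec_le [Nonempty A1] [Nonempty A2] (hT : ∀ o s' s a1 a2, 0 ≤ T o s' s a1 a2)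
    (hTsum : ∀ s a1 a2, ∑ o, ∑ s', T o s' s a1 a2 = 1) (hγ : 0 ≤ γ) {C : ℝ}
    (hW : ∀ b' ∈ stdSimplex ℝ S, |W (A *ᵥ b')| ≤ C) (hb : b ∈ stdSimplex ℝ S) :
    |Habs T R γ A W (A *ᵥ b)| ≤ ∑ s, ∑ a1, ∑ a2, |R s a1 a2| + γ * C :=
  have : Nonempty {b' : S → ℝ // b' ∈ stdSimplex ℝ S ∧ A *ᵥ b' = A *ᵥ b} := ⟨⟨b, hb, rfl⟩⟩
  abs_ciInf_le_of_abs_le fun b' => abs_Hop_le hT hTsum hγ hW b'.2.1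

lemma Habs_mulVec_le_Hop [Nonempty A1] [Nonempty A2] (hT : ∀ o s' s a1 a2, 0 ≤ T o s' s a1 a2)
    (hTsum : ∀ s a1 a2, ∑ o, ∑ s', T o s' s a1 a2 = 1) (hγ : 0 ≤ γ) {V : (S → ℝ) → ℝ}
    {C C' : ℝ} (hW : ∀ b' ∈ stdSimplex ℝ S, |W (A *ᵥ b')| ≤ C)
    (hV : ∀ b' ∈ stdSimplex ℝ S, |V b'| ≤ C') (hWV : ∀ b' ∈ stdSimplex ℝ S, W (A *ᵥ b') ≤ V b')
    (hb : b ∈ stdSimplex ℝ S) :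
    Habs T R γ A W (A *ᵥ b) ≤ Hop T R γ V b := by
  rw [Habs_eq_iInf_Hop]
  refine ciInf_le_of_le ?_ ⟨b, hb, rfl⟩ (Hop_mono hT hTsum hγ hW hV hWV hb)
  exact bddBelow_range_of_abs_le fun b' => abs_Hop_le hT hTsum hγ hW b'.2.1

end ValueIteration

theorem abstract_value_iteration_lower_bounds_general
    {S A1 A2 O : Type*} [Fintype S] [Fintype A1] [Fintype A2] [Fintype O]
    [Nonempty A1] [Nonempty A2] {k : ℕ}
    (T : O → S → S → A1 → A2 → ℝ) (R : S → A1 → A2 → ℝ) (γ : ℝ)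
    (hT : ∀ o s' s a1 a2, 0 ≤ T o s' s a1 a2)
    (hTsum : ∀ s a1 a2, ∑ o, ∑ s', T o s' s a1 a2 = 1)
    (hγ0 : 0 ≤ γ)
    (A : Matrix (Fin k) S ℝ)
    (W0 : (Fin k → ℝ) → ℝ) (hW0 : ∃ C, ∀ χ, |W0 χ| ≤ C)
    (Wt : ℕ → (Fin k → ℝ) → ℝ) (Vt : ℕ → (S → ℝ) → ℝ)
    (hWt0 : Wt 0 = W0) (hVt0 : ∀ b, Vt 0 b = W0 (A.mulVec b))
    (hWtS : ∀ t, Wt (t + 1) = Habs T R γ A (Wt t))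
    (hVtS : ∀ t, Vt (t + 1) = Hop T R γ (Vt t)) :
    ∀ t : ℕ, ∀ b ∈ stdSimplex ℝ S, Wt t (A.mulVec b) ≤ Vt t b := by
  have bounded : ∀ t, ∃ C, ∀ b ∈ stdSimplex ℝ S, |Wt t (A *ᵥ b)| ≤ C ∧ |Vt t b| ≤ C := by
    intro t
    induction t with
    | zero =>
      obtain ⟨C, hC⟩ := hW0
      exact ⟨C, fun b _ => ⟨hWt0 ▸ hC _, hVt0 b ▸ hC _⟩⟩
    | succ t ih =>
      obtain ⟨C, hC⟩ := ih
      refine ⟨∑ s, ∑ a1, ∑ a2, |R s a1 a2| + γ * C, fun b hb => ⟨?_, ?_⟩⟩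
      · rw [hWtS]
        exact abs_Habs_mulVec_le hT hTsum hγ0 (fun b hb => (hC b hb).1) hb
      · rw [hVtS]
        exact abs_Hop_le hT hTsum hγ0 (fun b hb => (hC b hb).2) hb
  intro t
  induction t with
  | zero => intro b _; rw [hWt0, hVt0]
  | succ t ih =>
    intro b hb
    obtain ⟨C, hC⟩ := bounded t
    rw [hWtS, hVtS]
    exact Habs_mulVec_le_Hop hT hTsum hγ0 (fun b hb => (hC b hb).1)
      (fun b hb => (hC b hb).2) ih hb

/-- Theorem 1, iterate form: abstract value iteration with `H̃` always
lower-bounds exact value iteration with `H`. -/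
theorem abstract_value_iteration_lower_bounds
    {S A1 A2 O : Type*} [Fintype S] [Fintype A1] [Fintype A2] [Fintype O]
    [Nonempty S] [Nonempty A1] [Nonempty A2] [Nonempty O] {k : ℕ}
    (T : O → S → S → A1 → A2 → ℝ) (R : S → A1 → A2 → ℝ) (γ : ℝ)
    (hT : ∀ o s' s a1 a2, 0 ≤ T o s' s a1 a2)
    (hTsum : ∀ s a1 a2, ∑ o, ∑ s', T o s' s a1 a2 = 1)
    (hγ0 : 0 ≤ γ) (hγ1 : γ < 1)
    (A : Matrix (Fin k) S ℝ)
    (W0 : (Fin k → ℝ) → ℝ) (hW0 : ∃ C, ∀ χ, |W0 χ| ≤ C)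
    (Wt : ℕ → (Fin k → ℝ) → ℝ) (Vt : ℕ → (S → ℝ) → ℝ)
    (hWt0 : Wt 0 = W0) (hVt0 : ∀ b, Vt 0 b = W0 (A.mulVec b))
    (hWtS : ∀ t, Wt (t + 1) = Habs T R γ A (Wt t))
    (hVtS : ∀ t, Vt (t + 1) = Hop T R γ (Vt t)) :
    ∀ t : ℕ, ∀ b ∈ stdSimplex ℝ S, Wt t (A.mulVec b) ≤ Vt t b :=
  abstract_value_iteration_lower_bounds_general T R γ hT hTsum hγ0 A W0 hW0 Wt Vt hWt0 hVt0 hWtS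
    hVtS
end

section
/- (Theorem 2.) Let Ṽ₀ : ℝ^k → ℝ be convex on 𝒳 and bounded on 𝒳 (e.g., an affine function), and define the iterates Ṽ_{t+1} = H̃ Ṽ_t. Then every iterate Ṽ_t is convex on 𝒳; moreover, if the iterates converge pointwise on 𝒳 to a function Ṽ* (the fixed point of H̃), then Ṽ* is convex on 𝒳. -/
open Finset Matrix

set_option linter.unusedSectionVars false

namespace POSGaux

open Finset Matrix

variable {S A1 A2 O : Type*} [Fintype S] [Fintype A1] [Fintype A2] [Fintype O]
variable {T : O → S → S → A1 → A2 → ℝ} {R : S → A1 → A2 → ℝ}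

lemma pos_pos_of_mul_pos {x y : ℝ} (hx : 0 ≤ x) (hxy : 0 < x * y) : 0 < x ∧ 0 < y := by
  rcases mul_pos_iff.mp hxy with h | h
  · exact h
  · linarith [h.1]

lemma vanish (θ' P' W' : ℝ) (h : θ' * P' = 0) :
    θ' * (if 0 < P' then P' * W' else 0) = 0 := by
  rcases mul_eq_zero.mp h with h | h
  · rw [h, zero_mul]
  · rw [h]; simp

lemma prObs_nonneg {b : S → ℝ} {π1 : A1 → ℝ} {π2 : S → A2 → ℝ}
    (hT : ∀ o s' s a1 a2, 0 ≤ T o s' s a1 a2)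
    (hb : ∀ s, 0 ≤ b s) (hπ1 : ∀ a1, 0 ≤ π1 a1) (hπ2 : ∀ s a2, 0 ≤ π2 s a2)
    (a1 : A1) (o : O) : 0 ≤ prObs T b π1 π2 a1 o :=
  mul_nonneg (hπ1 a1) (Finset.sum_nonneg fun s _ => Finset.sum_nonneg fun a2 _ =>
    Finset.sum_nonneg fun _ _ => mul_nonneg (mul_nonneg (hb s) (hπ2 s a2)) (hT _ _ _ _ _))

lemma prObs_eq_denom (T : O → S → S → A1 → A2 → ℝ) (b : S → ℝ) (π1 : A1 → ℝ)
    (π2 : S → A2 → ℝ) (a1 : A1) (o : O) :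
    prObs T b π1 π2 a1 o
      = π1 a1 * ∑ s'', ∑ s, ∑ a2, b s * π2 s a2 * T o s'' s a1 a2 := by
  unfold prObs
  congr 1
  calc ∑ s, ∑ a2, ∑ s', b s * π2 s a2 * T o s' s a1 a2
      = ∑ s, ∑ s', ∑ a2, b s * π2 s a2 * T o s' s a1 a2 :=
        Finset.sum_congr rfl fun s _ => Finset.sum_comm
    _ = ∑ s', ∑ s, ∑ a2, b s * π2 s a2 * T o s' s a1 a2 := Finset.sum_comm

lemma denom_pos {b : S → ℝ} {π1 : A1 → ℝ} {π2 : S → A2 → ℝ} {a1 : A1} {o : O}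
    (hT : ∀ o s' s a1 a2, 0 ≤ T o s' s a1 a2)
    (hb : ∀ s, 0 ≤ b s) (hπ2 : ∀ s a2, 0 ≤ π2 s a2)
    (hpos : 0 < prObs T b π1 π2 a1 o) :
    0 < ∑ s'', ∑ s, ∑ a2, b s * π2 s a2 * T o s'' s a1 a2 := by
  have hD0 : 0 ≤ ∑ s'', ∑ s, ∑ a2, b s * π2 s a2 * T o s'' s a1 a2 :=
    Finset.sum_nonneg fun _ _ => Finset.sum_nonneg fun s _ => Finset.sum_nonneg fun a2 _ =>
      mul_nonneg (mul_nonneg (hb s) (hπ2 s a2)) (hT _ _ _ _ _)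
  rcases hD0.lt_or_eq with h | h
  · exact h
  · rw [prObs_eq_denom, ← h, mul_zero] at hpos
    exact absurd hpos (lt_irrefl 0)

lemma beliefUpd_mem {b : S → ℝ} {π1 : A1 → ℝ} {π2 : S → A2 → ℝ} {a1 : A1} {o : O}
    (hT : ∀ o s' s a1 a2, 0 ≤ T o s' s a1 a2)
    (hb : ∀ s, 0 ≤ b s) (hπ2 : ∀ s a2, 0 ≤ π2 s a2)
    (hpos : 0 < prObs T b π1 π2 a1 o) :
    beliefUpd T b π2 a1 o ∈ stdSimplex ℝ S := by
  have hD := denom_pos hT hb hπ2 hpos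
  refine ⟨fun s' => div_nonneg ?_ hD.le, ?_⟩
  · exact Finset.sum_nonneg fun s _ => Finset.sum_nonneg fun a2 _ =>
      mul_nonneg (mul_nonneg (hb s) (hπ2 s a2)) (hT _ _ _ _ _)
  · unfold beliefUpd
    rw [← Finset.sum_div, div_self hD.ne']

lemma sum_prObs (hTsum : ∀ s a1 a2, ∑ o, ∑ s', T o s' s a1 a2 = 1)
    {b : S → ℝ} {π1 : A1 → ℝ} {π2 : S → A2 → ℝ}
    (hb : b ∈ stdSimplex ℝ S) (hπ1 : π1 ∈ stdSimplex ℝ A1)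
    (hπ2 : ∀ s, π2 s ∈ stdSimplex ℝ A2) :
    ∑ a1, ∑ o, prObs T b π1 π2 a1 o = 1 := by
  have inner : ∀ a1 : A1,
      ∑ o, ∑ s, ∑ a2, ∑ s', b s * π2 s a2 * T o s' s a1 a2 = 1 := by
    intro a1
    calc ∑ o, ∑ s, ∑ a2, ∑ s', b s * π2 s a2 * T o s' s a1 a2
        = ∑ s, ∑ o, ∑ a2, ∑ s', b s * π2 s a2 * T o s' s a1 a2 := Finset.sum_comm
      _ = ∑ s, ∑ a2, ∑ o, ∑ s', b s * π2 s a2 * T o s' s a1 a2 :=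
          Finset.sum_congr rfl fun s _ => Finset.sum_comm
      _ = ∑ s, ∑ a2, (b s * π2 s a2) * ∑ o, ∑ s', T o s' s a1 a2 := by
          simp only [Finset.mul_sum]
      _ = ∑ s, ∑ a2, b s * π2 s a2 := by simp only [hTsum, mul_one]
      _ = ∑ s, b s := by
          refine Finset.sum_congr rfl fun s _ => ?_
          rw [← Finset.mul_sum, (hπ2 s).2, mul_one]
      _ = 1 := hb.2
  unfold prObs
  calc ∑ a1, ∑ o, π1 a1 * ∑ s, ∑ a2, ∑ s', b s * π2 s a2 * T o s' s a1 a2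
      = ∑ a1, π1 a1 * ∑ o, ∑ s, ∑ a2, ∑ s', b s * π2 s a2 * T o s' s a1 a2 := by
        simp only [Finset.mul_sum]
    _ = ∑ a1, π1 a1 := by
        refine Finset.sum_congr rfl fun a1 _ => ?_
        rw [inner a1, mul_one]
    _ = 1 := hπ1.2

lemma sum_weights {b : S → ℝ} {π1 : A1 → ℝ} {π2 : S → A2 → ℝ}
    (hb : b ∈ stdSimplex ℝ S) (hπ1 : π1 ∈ stdSimplex ℝ A1)
    (hπ2 : ∀ s, π2 s ∈ stdSimplex ℝ A2) :
    ∑ s, ∑ a1, ∑ a2, b s * π1 a1 * π2 s a2 = 1 := by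
  calc ∑ s, ∑ a1, ∑ a2, b s * π1 a1 * π2 s a2
      = ∑ s, ∑ a1, b s * π1 a1 := by
        refine Finset.sum_congr rfl fun s _ => Finset.sum_congr rfl fun a1 _ => ?_
        rw [← Finset.mul_sum, (hπ2 s).2, mul_one]
    _ = ∑ s, b s := by
        refine Finset.sum_congr rfl fun s _ => ?_
        rw [← Finset.mul_sum, hπ1.2, mul_one]
    _ = 1 := hb.2

lemma expReward_abs_le {CR : ℝ} (hCR : ∀ s a1 a2, |R s a1 a2| ≤ CR)
    {b : S → ℝ} {π1 : A1 → ℝ} {π2 : S → A2 → ℝ}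
    (hb : b ∈ stdSimplex ℝ S) (hπ1 : π1 ∈ stdSimplex ℝ A1)
    (hπ2 : ∀ s, π2 s ∈ stdSimplex ℝ A2) :
    |expReward R b π1 π2| ≤ CR := by
  unfold expReward
  have h1 : |∑ s, ∑ a1, ∑ a2, b s * π1 a1 * π2 s a2 * R s a1 a2|
      ≤ ∑ s, ∑ a1, ∑ a2, (b s * π1 a1 * π2 s a2) * CR := by
    refine (Finset.abs_sum_le_sum_abs _ _).trans (Finset.sum_le_sum fun s _ => ?_)
    refine (Finset.abs_sum_le_sum_abs _ _).trans (Finset.sum_le_sum fun a1 _ => ?_)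
    refine (Finset.abs_sum_le_sum_abs _ _).trans (Finset.sum_le_sum fun a2 _ => ?_)
    rw [abs_mul]
    have hw : 0 ≤ b s * π1 a1 * π2 s a2 :=
      mul_nonneg (mul_nonneg (hb.1 s) (hπ1.1 a1)) ((hπ2 s).1 a2)
    rw [abs_of_nonneg hw]
    exact mul_le_mul_of_nonneg_left (hCR s a1 a2) hw
  refine h1.trans (le_of_eq ?_)
  simp only [← Finset.sum_mul]
  rw [sum_weights hb hπ1 hπ2, one_mul]

lemma stageVal_abs_le {γ CR C : ℝ} (hγ0 : 0 ≤ γ) (hC0 : 0 ≤ C)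
    (hT : ∀ o s' s a1 a2, 0 ≤ T o s' s a1 a2)
    (hTsum : ∀ s a1 a2, ∑ o, ∑ s', T o s' s a1 a2 = 1)
    (hCR : ∀ s a1 a2, |R s a1 a2| ≤ CR)
    {V : (S → ℝ) → ℝ} (hV : ∀ b' ∈ stdSimplex ℝ S, |V b'| ≤ C)
    {b : S → ℝ} {π1 : A1 → ℝ} {π2 : S → A2 → ℝ}
    (hb : b ∈ stdSimplex ℝ S) (hπ1 : π1 ∈ stdSimplex ℝ A1)
    (hπ2 : ∀ s, π2 s ∈ stdSimplex ℝ A2) :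
    |stageVal T R γ V b π1 π2| ≤ CR + γ * C := by
  unfold stageVal
  refine (abs_add_le _ _).trans ?_
  have h1 := expReward_abs_le hCR hb hπ1 hπ2
  have h2 : |γ * ∑ a1, ∑ o, (if 0 < prObs T b π1 π2 a1 o then
      prObs T b π1 π2 a1 o * V (beliefUpd T b π2 a1 o) else 0)| ≤ γ * C := by
    rw [abs_mul, abs_of_nonneg hγ0]
    refine mul_le_mul_of_nonneg_left ?_ hγ0
    have h3 : |∑ a1, ∑ o, (if 0 < prObs T b π1 π2 a1 o then
        prObs T b π1 π2 a1 o * V (beliefUpd T b π2 a1 o) else 0)|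
        ≤ ∑ a1, ∑ o, prObs T b π1 π2 a1 o * C := by
      refine (Finset.abs_sum_le_sum_abs _ _).trans (Finset.sum_le_sum fun a1 _ => ?_)
      refine (Finset.abs_sum_le_sum_abs _ _).trans (Finset.sum_le_sum fun o _ => ?_)
      by_cases hp : 0 < prObs T b π1 π2 a1 o
      · rw [if_pos hp, abs_mul, abs_of_nonneg hp.le]
        exact mul_le_mul_of_nonneg_left
          (hV _ (beliefUpd_mem hT hb.1 (fun s a2 => (hπ2 s).1 a2) hp)) hp.le
      · rw [if_neg hp, abs_zero]
        exact mul_nonneg (prObs_nonneg hT hb.1 hπ1.1 (fun s a2 => (hπ2 s).1 a2) a1 o) hC0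
    refine h3.trans (le_of_eq ?_)
    simp only [← Finset.sum_mul]
    rw [sum_prObs hTsum hb hπ1 hπ2, one_mul]
  linarith

end POSGaux

namespace POSGaux

variable {S A1 A2 O : Type*} [Fintype S] [Fintype A1] [Fintype A2] [Fintype O]

lemma stageVal_convex_comb {k : ℕ} {T : O → S → S → A1 → A2 → ℝ} {R : S → A1 → A2 → ℝ}
    {A : Matrix (Fin k) S ℝ} {W : (Fin k → ℝ) → ℝ}
    (hW : ConvexOn ℝ (A.mulVec '' stdSimplex ℝ S) W)
    (hT : ∀ o s' s a1 a2, 0 ≤ T o s' s a1 a2)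
    {γ : ℝ} (hγ0 : 0 ≤ γ)
    {θ η : ℝ} (hθ : 0 ≤ θ) (hη : 0 ≤ η)
    {b b₁ b₂ : S → ℝ} {π1 : A1 → ℝ} {π2 π2A π2B : S → A2 → ℝ}
    (hb₁ : ∀ s, 0 ≤ b₁ s) (hb₂ : ∀ s, 0 ≤ b₂ s)
    (hπ1 : ∀ a1, 0 ≤ π1 a1)
    (hπ2A : ∀ s a2, 0 ≤ π2A s a2) (hπ2B : ∀ s a2, 0 ≤ π2B s a2)
    (hK : ∀ s a2, b s * π2 s a2 = θ * (b₁ s * π2A s a2) + η * (b₂ s * π2B s a2)) :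
    stageVal T R γ (fun b' => W (A.mulVec b')) b π1 π2
      ≤ θ * stageVal T R γ (fun b' => W (A.mulVec b')) b₁ π1 π2A
        + η * stageVal T R γ (fun b' => W (A.mulVec b')) b₂ π1 π2B := by
  have hE : expReward R b π1 π2
      = θ * expReward R b₁ π1 π2A + η * expReward R b₂ π1 π2B := by
    unfold expReward
    simp only [Finset.mul_sum, ← Finset.sum_add_distrib]
    refine Finset.sum_congr rfl fun s _ => Finset.sum_congr rfl fun a1 _ =>
      Finset.sum_congr rfl fun a2 _ => ?_
    linear_combination (π1 a1 * R s a1 a2) * hK s a2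
  have key : ∀ (a1 : A1) (o : O),
      (if 0 < prObs T b π1 π2 a1 o then
        prObs T b π1 π2 a1 o * W (A.mulVec (beliefUpd T b π2 a1 o)) else 0)
      ≤ θ * (if 0 < prObs T b₁ π1 π2A a1 o then
          prObs T b₁ π1 π2A a1 o * W (A.mulVec (beliefUpd T b₁ π2A a1 o)) else 0)
        + η * (if 0 < prObs T b₂ π1 π2B a1 o then
          prObs T b₂ π1 π2B a1 o * W (A.mulVec (beliefUpd T b₂ π2B a1 o)) else 0) := by
    intro a1 o
    -- numerators
    have hn : ∀ s' : S, (∑ s, ∑ a2, b s * π2 s a2 * T o s' s a1 a2)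
        = θ * (∑ s, ∑ a2, b₁ s * π2A s a2 * T o s' s a1 a2)
          + η * (∑ s, ∑ a2, b₂ s * π2B s a2 * T o s' s a1 a2) := by
      intro s'
      simp only [Finset.mul_sum, ← Finset.sum_add_distrib]
      refine Finset.sum_congr rfl fun s _ => Finset.sum_congr rfl fun a2 _ => ?_
      linear_combination (T o s' s a1 a2) * hK s a2
    have hn1 : ∀ s' : S, 0 ≤ ∑ s, ∑ a2, b₁ s * π2A s a2 * T o s' s a1 a2 := fun s' =>
      Finset.sum_nonneg fun s _ => Finset.sum_nonneg fun a2 _ =>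
        mul_nonneg (mul_nonneg (hb₁ s) (hπ2A s a2)) (hT _ _ _ _ _)
    have hn2 : ∀ s' : S, 0 ≤ ∑ s, ∑ a2, b₂ s * π2B s a2 * T o s' s a1 a2 := fun s' =>
      Finset.sum_nonneg fun s _ => Finset.sum_nonneg fun a2 _ =>
        mul_nonneg (mul_nonneg (hb₂ s) (hπ2B s a2)) (hT _ _ _ _ _)
    set D := ∑ s'', ∑ s, ∑ a2, b s * π2 s a2 * T o s'' s a1 a2 with hDdef
    set D₁ := ∑ s'', ∑ s, ∑ a2, b₁ s * π2A s a2 * T o s'' s a1 a2 with hD1def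
    set D₂ := ∑ s'', ∑ s, ∑ a2, b₂ s * π2B s a2 * T o s'' s a1 a2 with hD2def
    have hD : D = θ * D₁ + η * D₂ := by
      rw [hDdef, hD1def, hD2def]
      simp only [hn]
      rw [Finset.sum_add_distrib, ← Finset.mul_sum, ← Finset.mul_sum]
    have hD10 : 0 ≤ D₁ := Finset.sum_nonneg fun s' _ => hn1 s'
    have hD20 : 0 ≤ D₂ := Finset.sum_nonneg fun s' _ => hn2 s'
    have hP : prObs T b π1 π2 a1 o = π1 a1 * D := prObs_eq_denom T b π1 π2 a1 o
    have hP1 : prObs T b₁ π1 π2A a1 o = π1 a1 * D₁ := prObs_eq_denom T b₁ π1 π2A a1 o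
    have hP2 : prObs T b₂ π1 π2B a1 o = π1 a1 * D₂ := prObs_eq_denom T b₂ π1 π2B a1 o
    have hP10 : 0 ≤ prObs T b₁ π1 π2A a1 o := by
      rw [hP1]; exact mul_nonneg (hπ1 a1) hD10
    have hP20 : 0 ≤ prObs T b₂ π1 π2B a1 o := by
      rw [hP2]; exact mul_nonneg (hπ1 a1) hD20
    by_cases hpos : 0 < prObs T b π1 π2 a1 o
    · rw [if_pos hpos]
      obtain ⟨hc, hDpos⟩ : 0 < π1 a1 ∧ 0 < D := by
        rw [hP] at hpos; exact pos_pos_of_mul_pos (hπ1 a1) hpos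
      by_cases h1 : 0 < θ * prObs T b₁ π1 π2A a1 o
        <;> by_cases h2 : 0 < η * prObs T b₂ π1 π2B a1 o
      · -- both contribute
        obtain ⟨hθpos, hP1pos⟩ := pos_pos_of_mul_pos hθ h1
        obtain ⟨hηpos, hP2pos⟩ := pos_pos_of_mul_pos hη h2
        have hD1pos : 0 < D₁ := by
          rw [hP1] at hP1pos; exact (pos_pos_of_mul_pos (hπ1 a1) hP1pos).2
        have hD2pos : 0 < D₂ := by
          rw [hP2] at hP2pos; exact (pos_pos_of_mul_pos (hπ1 a1) hP2pos).2
        have hw1 : (0:ℝ) ≤ θ * D₁ / D := div_nonneg (mul_nonneg hθ hD10) hDpos.le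
        have hw2 : (0:ℝ) ≤ η * D₂ / D := div_nonneg (mul_nonneg hη hD20) hDpos.le
        have hwsum : θ * D₁ / D + η * D₂ / D = 1 := by
          field_simp
          linarith [hD]
        have hτ : beliefUpd T b π2 a1 o
            = (θ * D₁ / D) • beliefUpd T b₁ π2A a1 o
              + (η * D₂ / D) • beliefUpd T b₂ π2B a1 o := by
          funext s'
          show (∑ s, ∑ a2, b s * π2 s a2 * T o s' s a1 a2) / D
              = (θ * D₁ / D) * ((∑ s, ∑ a2, b₁ s * π2A s a2 * T o s' s a1 a2) / D₁)
                + (η * D₂ / D) * ((∑ s, ∑ a2, b₂ s * π2B s a2 * T o s' s a1 a2) / D₂)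
          rw [hn s']
          field_simp
        have hmul : A.mulVec (beliefUpd T b π2 a1 o)
            = (θ * D₁ / D) • A.mulVec (beliefUpd T b₁ π2A a1 o)
              + (η * D₂ / D) • A.mulVec (beliefUpd T b₂ π2B a1 o) := by
          rw [hτ, Matrix.mulVec_add, Matrix.mulVec_smul, Matrix.mulVec_smul]
        have hmem1 : A.mulVec (beliefUpd T b₁ π2A a1 o) ∈ A.mulVec '' stdSimplex ℝ S :=
          ⟨_, beliefUpd_mem hT hb₁ hπ2A hP1pos, rfl⟩
        have hmem2 : A.mulVec (beliefUpd T b₂ π2B a1 o) ∈ A.mulVec '' stdSimplex ℝ S :=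
          ⟨_, beliefUpd_mem hT hb₂ hπ2B hP2pos, rfl⟩
        have hWle := hW.2 hmem1 hmem2 hw1 hw2 hwsum
        rw [if_pos hP1pos, if_pos hP2pos, hmul]
        calc prObs T b π1 π2 a1 o
              * W ((θ * D₁ / D) • A.mulVec (beliefUpd T b₁ π2A a1 o)
                + (η * D₂ / D) • A.mulVec (beliefUpd T b₂ π2B a1 o))
            ≤ prObs T b π1 π2 a1 o
              * ((θ * D₁ / D) * W (A.mulVec (beliefUpd T b₁ π2A a1 o))
                + (η * D₂ / D) * W (A.mulVec (beliefUpd T b₂ π2B a1 o))) :=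
              mul_le_mul_of_nonneg_left hWle hpos.le
          _ = θ * (prObs T b₁ π1 π2A a1 o * W (A.mulVec (beliefUpd T b₁ π2A a1 o)))
                + η * (prObs T b₂ π1 π2B a1 o * W (A.mulVec (beliefUpd T b₂ π2B a1 o))) := by
              rw [hP, hP1, hP2]
              field_simp
      · -- second vanishes
        have hηP2 : η * prObs T b₂ π1 π2B a1 o = 0 :=
          le_antisymm (not_lt.mp h2) (mul_nonneg hη hP20)
        obtain ⟨hθpos, hP1pos⟩ := pos_pos_of_mul_pos hθ h1
        have hD1pos : 0 < D₁ := by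
          rw [hP1] at hP1pos; exact (pos_pos_of_mul_pos (hπ1 a1) hP1pos).2
        have hηD2 : η * D₂ = 0 := by
          rw [hP2] at hηP2
          rcases mul_eq_zero.mp hηP2 with h | h
          · rw [h, zero_mul]
          · rcases mul_eq_zero.mp h with h' | h'
            · exact absurd h' hc.ne'
            · rw [h', mul_zero]
        have hns : ∀ s' : S, η * (∑ s, ∑ a2, b₂ s * π2B s a2 * T o s' s a1 a2) = 0 := by
          intro s'
          rcases mul_eq_zero.mp hηD2 with h | h
          · rw [h, zero_mul]
          · have h2' : (∑ s, ∑ a2, b₂ s * π2B s a2 * T o s' s a1 a2) = 0 :=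
              (Finset.sum_eq_zero_iff_of_nonneg fun x _ => hn2 x).mp h s' (Finset.mem_univ s')
            rw [h2', mul_zero]
        have hτ : beliefUpd T b π2 a1 o = beliefUpd T b₁ π2A a1 o := by
          funext s'
          show (∑ s, ∑ a2, b s * π2 s a2 * T o s' s a1 a2) / D
              = (∑ s, ∑ a2, b₁ s * π2A s a2 * T o s' s a1 a2) / D₁
          rw [hn s', hns s', hD, hηD2, add_zero, add_zero,
            mul_div_mul_left _ _ hθpos.ne']
        have hPP : prObs T b π1 π2 a1 o = θ * prObs T b₁ π1 π2A a1 o := by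
          rw [hP, hP1, hD]
          linear_combination (π1 a1) * hηD2
        rw [if_pos hP1pos, hτ, hPP,
          vanish η (prObs T b₂ π1 π2B a1 o) (W (A.mulVec (beliefUpd T b₂ π2B a1 o))) hηP2,
          add_zero]
        exact le_of_eq (by ring)
      · -- first vanishes
        have hθP1 : θ * prObs T b₁ π1 π2A a1 o = 0 :=
          le_antisymm (not_lt.mp h1) (mul_nonneg hθ hP10)
        obtain ⟨hηpos, hP2pos⟩ := pos_pos_of_mul_pos hη h2
        have hD2pos : 0 < D₂ := by
          rw [hP2] at hP2pos; exact (pos_pos_of_mul_pos (hπ1 a1) hP2pos).2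
        have hθD1 : θ * D₁ = 0 := by
          rw [hP1] at hθP1
          rcases mul_eq_zero.mp hθP1 with h | h
          · rw [h, zero_mul]
          · rcases mul_eq_zero.mp h with h' | h'
            · exact absurd h' hc.ne'
            · rw [h', mul_zero]
        have hns : ∀ s' : S, θ * (∑ s, ∑ a2, b₁ s * π2A s a2 * T o s' s a1 a2) = 0 := by
          intro s'
          rcases mul_eq_zero.mp hθD1 with h | h
          · rw [h, zero_mul]
          · have h2' : (∑ s, ∑ a2, b₁ s * π2A s a2 * T o s' s a1 a2) = 0 :=
              (Finset.sum_eq_zero_iff_of_nonneg fun x _ => hn1 x).mp h s' (Finset.mem_univ s')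
            rw [h2', mul_zero]
        have hτ : beliefUpd T b π2 a1 o = beliefUpd T b₂ π2B a1 o := by
          funext s'
          show (∑ s, ∑ a2, b s * π2 s a2 * T o s' s a1 a2) / D
              = (∑ s, ∑ a2, b₂ s * π2B s a2 * T o s' s a1 a2) / D₂
          rw [hn s', hns s', hD, hθD1, zero_add, zero_add,
            mul_div_mul_left _ _ hηpos.ne']
        have hPP : prObs T b π1 π2 a1 o = η * prObs T b₂ π1 π2B a1 o := by
          rw [hP, hP2, hD]
          linear_combination (π1 a1) * hθD1
        rw [if_pos hP2pos, hτ, hPP,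
          vanish θ (prObs T b₁ π1 π2A a1 o) (W (A.mulVec (beliefUpd T b₁ π2A a1 o))) hθP1,
          zero_add]
        exact le_of_eq (by ring)
      · -- both vanish: contradiction with positivity
        exfalso
        have hθP1 : θ * prObs T b₁ π1 π2A a1 o = 0 :=
          le_antisymm (not_lt.mp h1) (mul_nonneg hθ hP10)
        have hηP2 : η * prObs T b₂ π1 π2B a1 o = 0 :=
          le_antisymm (not_lt.mp h2) (mul_nonneg hη hP20)
        have hPsum : prObs T b π1 π2 a1 o
            = θ * prObs T b₁ π1 π2A a1 o + η * prObs T b₂ π1 π2B a1 o := by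
          rw [hP, hP1, hP2, hD]; ring
        rw [hPsum, hθP1, hηP2, add_zero] at hpos
        exact lt_irrefl 0 hpos
    · -- prObs b = 0
      rw [if_neg hpos]
      have hP0 : prObs T b π1 π2 a1 o = 0 := by
        refine le_antisymm (not_lt.mp hpos) ?_
        rw [hP]
        refine mul_nonneg (hπ1 a1) (Finset.sum_nonneg fun s' _ => ?_)
        rw [hn s']
        exact add_nonneg (mul_nonneg hθ (hn1 s')) (mul_nonneg hη (hn2 s'))
      have hPsum : prObs T b π1 π2 a1 o
          = θ * prObs T b₁ π1 π2A a1 o + η * prObs T b₂ π1 π2B a1 o := by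
        rw [hP, hP1, hP2, hD]; ring
      have hθP1 : θ * prObs T b₁ π1 π2A a1 o = 0 := by
        have h1 : 0 ≤ θ * prObs T b₁ π1 π2A a1 o := mul_nonneg hθ hP10
        have h2 : 0 ≤ η * prObs T b₂ π1 π2B a1 o := mul_nonneg hη hP20
        rw [hP0] at hPsum
        linarith
      have hηP2 : η * prObs T b₂ π1 π2B a1 o = 0 := by
        have h1 : 0 ≤ θ * prObs T b₁ π1 π2A a1 o := mul_nonneg hθ hP10
        have h2 : 0 ≤ η * prObs T b₂ π1 π2B a1 o := mul_nonneg hη hP20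
        rw [hP0] at hPsum
        linarith
      rw [vanish θ _ _ hθP1, vanish η _ _ hηP2, add_zero]
  -- assemble
  simp only [stageVal]
  have hsum : (∑ a1, ∑ o, if 0 < prObs T b π1 π2 a1 o then
      prObs T b π1 π2 a1 o * W (A.mulVec (beliefUpd T b π2 a1 o)) else 0)
      ≤ θ * (∑ a1, ∑ o, if 0 < prObs T b₁ π1 π2A a1 o then
          prObs T b₁ π1 π2A a1 o * W (A.mulVec (beliefUpd T b₁ π2A a1 o)) else 0)
        + η * (∑ a1, ∑ o, if 0 < prObs T b₂ π1 π2B a1 o then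
          prObs T b₂ π1 π2B a1 o * W (A.mulVec (beliefUpd T b₂ π2B a1 o)) else 0) := by
    calc (∑ a1, ∑ o, if 0 < prObs T b π1 π2 a1 o then
        prObs T b π1 π2 a1 o * W (A.mulVec (beliefUpd T b π2 a1 o)) else 0)
        ≤ ∑ a1, ∑ o,
            (θ * (if 0 < prObs T b₁ π1 π2A a1 o then
              prObs T b₁ π1 π2A a1 o * W (A.mulVec (beliefUpd T b₁ π2A a1 o)) else 0)
            + η * (if 0 < prObs T b₂ π1 π2B a1 o then
              prObs T b₂ π1 π2B a1 o * W (A.mulVec (beliefUpd T b₂ π2B a1 o)) else 0)) :=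
          Finset.sum_le_sum fun a1 _ => Finset.sum_le_sum fun o _ => key a1 o
      _ = _ := by
          simp only [Finset.sum_add_distrib, Finset.mul_sum]
  have hmul := mul_le_mul_of_nonneg_left hsum hγ0
  rw [hE]
  have hR : ∀ X₁ Y₁ X₂ Y₂ : ℝ, θ * (X₁ + γ * Y₁) + η * (X₂ + γ * Y₂)
      = (θ * X₁ + η * X₂) + γ * (θ * Y₁ + η * Y₂) := by intros; ring
  rw [hR]
  linarith

end POSGaux

namespace POSGaux

variable {S A1 A2 O : Type*} [Fintype S] [Fintype A1] [Fintype A2] [Fintype O]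
variable [Nonempty S] [Nonempty A1] [Nonempty A2] [Nonempty O]

lemma habs_step {k : ℕ} {T : O → S → S → A1 → A2 → ℝ} {R : S → A1 → A2 → ℝ}
    (hT : ∀ o s' s a1 a2, 0 ≤ T o s' s a1 a2)
    (hTsum : ∀ s a1 a2, ∑ o, ∑ s', T o s' s a1 a2 = 1)
    {γ : ℝ} (hγ0 : 0 ≤ γ)
    (A : Matrix (Fin k) S ℝ) {W : (Fin k → ℝ) → ℝ}
    (hW : ConvexOn ℝ (A.mulVec '' stdSimplex ℝ S) W)
    {C CR : ℝ} (hC0 : 0 ≤ C)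
    (hCbd : ∀ b' ∈ stdSimplex ℝ S, |W (A.mulVec b')| ≤ C)
    (hCR : ∀ s a1 a2, |R s a1 a2| ≤ CR) :
    ConvexOn ℝ (A.mulVec '' stdSimplex ℝ S) (Habs T R γ A W) ∧
      ∀ b' ∈ stdSimplex ℝ S, |Habs T R γ A W (A.mulVec b')| ≤ CR + γ * C := by
  classical
  set K := CR + γ * C with hKdef
  set V : (S → ℝ) → ℝ := fun b' => W (A.mulVec b') with hVdef
  haveI hP1ne : Nonempty {π1 : A1 → ℝ // π1 ∈ stdSimplex ℝ A1} :=
    ⟨⟨_, ite_eq_mem_stdSimplex ℝ (Classical.arbitrary A1)⟩⟩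
  haveI hP2ne : Nonempty {π2 : S → A2 → ℝ // ∀ s, π2 s ∈ stdSimplex ℝ A2} :=
    ⟨⟨fun _ => _, fun _ => ite_eq_mem_stdSimplex ℝ (Classical.arbitrary A2)⟩⟩
  -- basic bound on stage values
  have hbd : ∀ (b : S → ℝ), b ∈ stdSimplex ℝ S →
      ∀ (π2 : {π2 : S → A2 → ℝ // ∀ s, π2 s ∈ stdSimplex ℝ A2})
        (π1 : {π1 : A1 → ℝ // π1 ∈ stdSimplex ℝ A1}),
        |stageVal T R γ V b π1.1 π2.1| ≤ K := by
    intro b hb π2 π1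
    exact stageVal_abs_le hγ0 hC0 hT hTsum hCR (fun b' hb' => hCbd b' hb') hb π1.2 π2.2
  have hsub : ∀ (b : S → ℝ), b ∈ stdSimplex ℝ S →
      ∀ (π2 : {π2 : S → A2 → ℝ // ∀ s, π2 s ∈ stdSimplex ℝ A2}),
      BddAbove (Set.range fun π1 : {π1 : A1 → ℝ // π1 ∈ stdSimplex ℝ A1} =>
        stageVal T R γ V b π1.1 π2.1) := by
    intro b hb π2
    exact ⟨K, by rintro x ⟨π1, rfl⟩; exact (abs_le.mp (hbd b hb π2 π1)).2⟩
  have hsup_le : ∀ (b : S → ℝ), b ∈ stdSimplex ℝ S →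
      ∀ (π2 : {π2 : S → A2 → ℝ // ∀ s, π2 s ∈ stdSimplex ℝ A2}),
      (⨆ π1 : {π1 : A1 → ℝ // π1 ∈ stdSimplex ℝ A1},
        stageVal T R γ V b π1.1 π2.1) ≤ K := fun b hb π2 =>
    ciSup_le fun π1 => (abs_le.mp (hbd b hb π2 π1)).2
  have hsup_ge : ∀ (b : S → ℝ), b ∈ stdSimplex ℝ S →
      ∀ (π2 : {π2 : S → A2 → ℝ // ∀ s, π2 s ∈ stdSimplex ℝ A2}),
      -K ≤ ⨆ π1 : {π1 : A1 → ℝ // π1 ∈ stdSimplex ℝ A1},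
        stageVal T R γ V b π1.1 π2.1 := by
    intro b hb π2
    have h := (abs_le.mp (hbd b hb π2 (Classical.arbitrary _))).1
    exact h.trans (le_ciSup (hsub b hb π2) (Classical.arbitrary _))
  -- bounds on Habs
  have hbdlow : ∀ (χ : Fin k → ℝ),
      BddBelow (Set.range fun b : {b : S → ℝ // b ∈ stdSimplex ℝ S ∧ A.mulVec b = χ} =>
        ⨅ π2 : {π2 : S → A2 → ℝ // ∀ s, π2 s ∈ stdSimplex ℝ A2},
          ⨆ π1 : {π1 : A1 → ℝ // π1 ∈ stdSimplex ℝ A1},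
            stageVal T R γ V b.1 π1.1 π2.1) := by
    intro χ
    exact ⟨-K, by
      rintro x ⟨bb, rfl⟩
      exact le_ciInf fun π2 => hsup_ge bb.1 bb.2.1 π2⟩
  have hbdlow2 : ∀ (b : S → ℝ), b ∈ stdSimplex ℝ S →
      BddBelow (Set.range fun π2 : {π2 : S → A2 → ℝ // ∀ s, π2 s ∈ stdSimplex ℝ A2} =>
        ⨆ π1 : {π1 : A1 → ℝ // π1 ∈ stdSimplex ℝ A1},
          stageVal T R γ V b π1.1 π2.1) := by
    intro b hb
    exact ⟨-K, by rintro x ⟨π2, rfl⟩; exact hsup_ge b hb π2⟩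
  have hboundpart : ∀ b' ∈ stdSimplex ℝ S, |Habs T R γ A W (A.mulVec b')| ≤ K := by
    intro b' hb'
    haveI : Nonempty {b : S → ℝ // b ∈ stdSimplex ℝ S ∧ A.mulVec b = A.mulVec b'} :=
      ⟨⟨b', hb', rfl⟩⟩
    rw [abs_le]
    constructor
    · exact le_ciInf fun bb => le_ciInf fun π2 => hsup_ge bb.1 bb.2.1 π2
    · refine le_trans (ciInf_le (hbdlow (A.mulVec b')) ⟨b', hb', rfl⟩) ?_
      refine le_trans (ciInf_le (hbdlow2 b' hb') (Classical.arbitrary _)) ?_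
      exact hsup_le b' hb' _
  refine ⟨⟨?_, ?_⟩, hboundpart⟩
  · -- convexity of the set
    have h := (convex_stdSimplex ℝ S).linear_image A.mulVecLin
    rwa [Matrix.coe_mulVecLin] at h
  · rintro χ₁ ⟨b₁', hb₁', rfl⟩ χ₂ ⟨b₂', hb₂', rfl⟩ θ η hθ hη hθη
    simp only [smul_eq_mul]
    refine le_of_forall_pos_le_add fun ε hε => ?_
    haveI hne1 : Nonempty {b : S → ℝ // b ∈ stdSimplex ℝ S ∧ A.mulVec b = A.mulVec b₁'} :=
      ⟨⟨b₁', hb₁', rfl⟩⟩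
    haveI hne2 : Nonempty {b : S → ℝ // b ∈ stdSimplex ℝ S ∧ A.mulVec b = A.mulVec b₂'} :=
      ⟨⟨b₂', hb₂', rfl⟩⟩
    -- near-optimal choices for χ₁
    obtain ⟨bb₁, hbb₁⟩ := exists_lt_of_ciInf_lt
      (show (⨅ b : {b : S → ℝ // b ∈ stdSimplex ℝ S ∧ A.mulVec b = A.mulVec b₁'},
          ⨅ π2 : {π2 : S → A2 → ℝ // ∀ s, π2 s ∈ stdSimplex ℝ A2},
            ⨆ π1 : {π1 : A1 → ℝ // π1 ∈ stdSimplex ℝ A1},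
              stageVal T R γ V b.1 π1.1 π2.1)
        < Habs T R γ A W (A.mulVec b₁') + ε from lt_add_of_pos_right _ hε)
    obtain ⟨pp₁, hpp₁⟩ := exists_lt_of_ciInf_lt hbb₁
    obtain ⟨bb₂, hbb₂⟩ := exists_lt_of_ciInf_lt
      (show (⨅ b : {b : S → ℝ // b ∈ stdSimplex ℝ S ∧ A.mulVec b = A.mulVec b₂'},
          ⨅ π2 : {π2 : S → A2 → ℝ // ∀ s, π2 s ∈ stdSimplex ℝ A2},
            ⨆ π1 : {π1 : A1 → ℝ // π1 ∈ stdSimplex ℝ A1},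
              stageVal T R γ V b.1 π1.1 π2.1)
        < Habs T R γ A W (A.mulVec b₂') + ε from lt_add_of_pos_right _ hε)
    obtain ⟨pp₂, hpp₂⟩ := exists_lt_of_ciInf_lt hbb₂
    -- mixed belief and strategy
    set bmix : S → ℝ := θ • bb₁.1 + η • bb₂.1 with hbmixdef
    have hbmixmem : bmix ∈ stdSimplex ℝ S :=
      (convex_stdSimplex ℝ S) bb₁.2.1 bb₂.2.1 hθ hη hθη
    have hbmixs : ∀ s, bmix s = θ * bb₁.1 s + η * bb₂.1 s := by
      intro s; simp [hbmixdef, smul_eq_mul]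
    have hAbmix : A.mulVec bmix = θ • A.mulVec b₁' + η • A.mulVec b₂' := by
      rw [hbmixdef, Matrix.mulVec_add, Matrix.mulVec_smul, Matrix.mulVec_smul,
        bb₁.2.2, bb₂.2.2]
    set π2mix : S → A2 → ℝ := fun s a2 =>
      if bmix s = 0 then pp₁.1 s a2
      else (θ * (bb₁.1 s * pp₁.1 s a2) + η * (bb₂.1 s * pp₂.1 s a2)) / bmix s
      with hπ2mixdef
    have hKmix : ∀ s a2, bmix s * π2mix s a2
        = θ * (bb₁.1 s * pp₁.1 s a2) + η * (bb₂.1 s * pp₂.1 s a2) := by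
      intro s a2
      by_cases h : bmix s = 0
      · have h1 : θ * bb₁.1 s = 0 ∧ η * bb₂.1 s = 0 := by
          rw [hbmixs s] at h
          exact (add_eq_zero_iff_of_nonneg (mul_nonneg hθ (bb₁.2.1.1 s))
            (mul_nonneg hη (bb₂.2.1.1 s))).mp h
        simp only [hπ2mixdef, if_pos h, h, zero_mul]
        have e1 : θ * (bb₁.1 s * pp₁.1 s a2) = 0 := by
          rw [show θ * (bb₁.1 s * pp₁.1 s a2) = (θ * bb₁.1 s) * pp₁.1 s a2 by ring,
            h1.1, zero_mul]
        have e2 : η * (bb₂.1 s * pp₂.1 s a2) = 0 := by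
          rw [show η * (bb₂.1 s * pp₂.1 s a2) = (η * bb₂.1 s) * pp₂.1 s a2 by ring,
            h1.2, zero_mul]
        rw [e1, e2, add_zero]
      · simp only [hπ2mixdef, if_neg h]
        rw [mul_comm, div_mul_cancel₀ _ h]
    have hπ2mixmem : ∀ s, π2mix s ∈ stdSimplex ℝ A2 := by
      intro s
      by_cases h : bmix s = 0
      · simp only [hπ2mixdef, if_pos h]
        exact pp₁.2 s
      · have hbpos : 0 < bmix s := (hbmixmem.1 s).lt_of_ne' h
        constructor
        · intro a2
          simp only [hπ2mixdef, if_neg h]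
          refine div_nonneg (add_nonneg (mul_nonneg hθ (mul_nonneg (bb₁.2.1.1 s)
            ((pp₁.2 s).1 a2))) (mul_nonneg hη (mul_nonneg (bb₂.2.1.1 s)
            ((pp₂.2 s).1 a2)))) hbpos.le
        · simp only [hπ2mixdef, if_neg h]
          rw [← Finset.sum_div]
          rw [div_eq_one_iff_eq h]
          rw [Finset.sum_add_distrib]
          simp only [← Finset.mul_sum]
          rw [(pp₁.2 s).2, (pp₂.2 s).2, mul_one, mul_one, hbmixs s]
    -- main estimate
    have hstage : ∀ π1 : {π1 : A1 → ℝ // π1 ∈ stdSimplex ℝ A1},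
        stageVal T R γ V bmix π1.1 π2mix
          ≤ θ * (⨆ π1' : {π1 : A1 → ℝ // π1 ∈ stdSimplex ℝ A1},
              stageVal T R γ V bb₁.1 π1'.1 pp₁.1)
            + η * (⨆ π1' : {π1 : A1 → ℝ // π1 ∈ stdSimplex ℝ A1},
              stageVal T R γ V bb₂.1 π1'.1 pp₂.1) := by
      intro π1
      refine le_trans (stageVal_convex_comb hW hT hγ0 hθ hη bb₁.2.1.1 bb₂.2.1.1
        π1.2.1 (fun s a2 => (pp₁.2 s).1 a2) (fun s a2 => (pp₂.2 s).1 a2) hKmix) ?_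
      have l1 : stageVal T R γ V bb₁.1 π1.1 pp₁.1
          ≤ ⨆ π1' : {π1 : A1 → ℝ // π1 ∈ stdSimplex ℝ A1},
            stageVal T R γ V bb₁.1 π1'.1 pp₁.1 := le_ciSup (hsub bb₁.1 bb₁.2.1 pp₁) π1
      have l2 : stageVal T R γ V bb₂.1 π1.1 pp₂.1
          ≤ ⨆ π1' : {π1 : A1 → ℝ // π1 ∈ stdSimplex ℝ A1},
            stageVal T R γ V bb₂.1 π1'.1 pp₂.1 := le_ciSup (hsub bb₂.1 bb₂.2.1 pp₂) π1
      exact add_le_add (mul_le_mul_of_nonneg_left l1 hθ) (mul_le_mul_of_nonneg_left l2 hη)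
    have hsupmix : (⨆ π1 : {π1 : A1 → ℝ // π1 ∈ stdSimplex ℝ A1},
        stageVal T R γ V bmix π1.1 π2mix)
        ≤ θ * (⨆ π1' : {π1 : A1 → ℝ // π1 ∈ stdSimplex ℝ A1},
            stageVal T R γ V bb₁.1 π1'.1 pp₁.1)
          + η * (⨆ π1' : {π1 : A1 → ℝ // π1 ∈ stdSimplex ℝ A1},
            stageVal T R γ V bb₂.1 π1'.1 pp₂.1) := ciSup_le hstage
    have hHle : Habs T R γ A W (θ • A.mulVec b₁' + η • A.mulVec b₂')
        ≤ ⨆ π1 : {π1 : A1 → ℝ // π1 ∈ stdSimplex ℝ A1},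
            stageVal T R γ V bmix π1.1 π2mix := by
      refine le_trans (ciInf_le (hbdlow (θ • A.mulVec b₁' + η • A.mulVec b₂'))
        ⟨bmix, hbmixmem, hAbmix⟩) ?_
      exact ciInf_le (hbdlow2 bmix hbmixmem) ⟨π2mix, hπ2mixmem⟩
    have step1 : θ * (⨆ π1' : {π1 : A1 → ℝ // π1 ∈ stdSimplex ℝ A1},
          stageVal T R γ V bb₁.1 π1'.1 pp₁.1)
        ≤ θ * (Habs T R γ A W (A.mulVec b₁') + ε) :=
      mul_le_mul_of_nonneg_left hpp₁.le hθ
    have step2 : η * (⨆ π1' : {π1 : A1 → ℝ // π1 ∈ stdSimplex ℝ A1},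
          stageVal T R γ V bb₂.1 π1'.1 pp₂.1)
        ≤ η * (Habs T R γ A W (A.mulVec b₂') + ε) :=
      mul_le_mul_of_nonneg_left hpp₂.le hη
    have hfin : θ * (Habs T R γ A W (A.mulVec b₁') + ε)
        + η * (Habs T R γ A W (A.mulVec b₂') + ε)
        = θ * Habs T R γ A W (A.mulVec b₁') + η * Habs T R γ A W (A.mulVec b₂') + ε := by
      linear_combination ε * hθη
    linarith [hHle, hsupmix, step1, step2]

end POSGaux

open Filter Topology in
/-- Theorem 2: starting from a convex bounded `Ṽ₀`, every iterate of `H̃`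
is convex on `𝒳`, and a pointwise limit `Ṽ*` of the iterates is convex on `𝒳`. -/
theorem habs_iterates_and_fixed_point_convex
    {S A1 A2 O : Type*} [Fintype S] [Fintype A1] [Fintype A2] [Fintype O]
    [Nonempty S] [Nonempty A1] [Nonempty A2] [Nonempty O] {k : ℕ}
    (T : O → S → S → A1 → A2 → ℝ) (R : S → A1 → A2 → ℝ) (γ : ℝ)
    (hT : ∀ o s' s a1 a2, 0 ≤ T o s' s a1 a2)
    (hTsum : ∀ s a1 a2, ∑ o, ∑ s', T o s' s a1 a2 = 1)
    (hγ0 : 0 ≤ γ) (hγ1 : γ < 1)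
    (A : Matrix (Fin k) S ℝ)
    (W0 : (Fin k → ℝ) → ℝ)
    (hW0conv : ConvexOn ℝ (A.mulVec '' stdSimplex ℝ S) W0)
    (hW0bdd : ∃ C, ∀ χ ∈ A.mulVec '' stdSimplex ℝ S, |W0 χ| ≤ C)
    (Wt : ℕ → (Fin k → ℝ) → ℝ)
    (hWt0 : Wt 0 = W0)
    (hWtS : ∀ t, Wt (t + 1) = Habs T R γ A (Wt t)) :
    (∀ t : ℕ, ConvexOn ℝ (A.mulVec '' stdSimplex ℝ S) (Wt t)) ∧
    (∀ Wstar : (Fin k → ℝ) → ℝ,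
      (∀ χ ∈ A.mulVec '' stdSimplex ℝ S,
        Tendsto (fun t => Wt t χ) atTop (𝓝 (Wstar χ))) →
      ConvexOn ℝ (A.mulVec '' stdSimplex ℝ S) Wstar) := by
  classical
  obtain ⟨CR', hCR'⟩ :=
    (Set.finite_range (fun x : S × A1 × A2 => |R x.1 x.2.1 x.2.2|)).bddAbove
  set CR := max CR' 0 with hCRdef
  have hCR : ∀ s a1 a2, |R s a1 a2| ≤ CR :=
    fun s a1 a2 => le_trans (hCR' ⟨(s, a1, a2), rfl⟩) (le_max_left _ _)
  have main : ∀ t, ConvexOn ℝ (A.mulVec '' stdSimplex ℝ S) (Wt t) ∧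
      ∃ C, 0 ≤ C ∧ ∀ b' ∈ stdSimplex ℝ S, |Wt t (A.mulVec b')| ≤ C := by
    intro t
    induction t with
    | zero =>
      rw [hWt0]
      obtain ⟨C, hC⟩ := hW0bdd
      exact ⟨hW0conv, max C 0, le_max_right _ _,
        fun b' hb' => (hC _ ⟨b', hb', rfl⟩).trans (le_max_left _ _)⟩
    | succ t ih =>
      obtain ⟨hconv, C, hC0, hCbd⟩ := ih
      obtain ⟨h1, h2⟩ := POSGaux.habs_step hT hTsum hγ0 A hconv hC0 hCbd hCR
      rw [hWtS t]
      refine ⟨h1, CR + γ * C, ?_, h2⟩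
      have h0CR : (0:ℝ) ≤ CR := le_max_right _ _
      have := mul_nonneg hγ0 hC0
      linarith
  refine ⟨fun t => (main t).1, ?_⟩
  intro Wstar hlim
  have hXconv : Convex ℝ (A.mulVec '' stdSimplex ℝ S) := by
    have h := (convex_stdSimplex ℝ S).linear_image A.mulVecLin
    rwa [Matrix.coe_mulVecLin] at h
  refine ⟨hXconv, ?_⟩
  intro χ₁ h₁ χ₂ h₂ a b ha hb hab
  have hmem : a • χ₁ + b • χ₂ ∈ A.mulVec '' stdSimplex ℝ S := hXconv h₁ h₂ ha hb hab
  have hineq : ∀ t, Wt t (a • χ₁ + b • χ₂) ≤ a * Wt t χ₁ + b * Wt t χ₂ := by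
    intro t
    have := (main t).1.2 h₁ h₂ ha hb hab
    simpa [smul_eq_mul] using this
  have hlim2 : Filter.Tendsto (fun t => a * Wt t χ₁ + b * Wt t χ₂) Filter.atTop
      (nhds (a * Wstar χ₁ + b * Wstar χ₂)) :=
    ((hlim χ₁ h₁).const_mul a).add ((hlim χ₂ h₂).const_mul b)
  have hfin := le_of_tendsto_of_tendsto' (hlim _ hmem) hlim2 hineq
  simpa [smul_eq_mul] using hfin
end
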